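/- Let $(\Omega,\mathscr F,\mathbb P,(\mathscr F_j)_{j=0}^\infty)$ be a filtered probability space and $(\xi_j)_{j=1}^\infty$ an adapted sequence of real random variables such that $\xi_j$ is independent of $\mathscr F_{j-1}$, $\mathsf E\xi_j=0$ and $\mathsf E\xi_j^2=\sigma_j^2\in(0,\infty)$; set $s_n^2=\sum_{j=1}^n\sigma_j^2$. Assume the Lindeberg condition, $\overline\lambda_j\le\Lambda$, and the stabilization condition $M_n\to 0$ with limits $\overline\lambda\ge\underline\lambda\ge 0$. Let $v:[0,1]\times\mathbb R\to\mathbb R$ have continuous partial derivatives $v_t$ and $v_{xx}$ with $v_{xx}$ bounded, and satisfy $v_t+\tfrac12(\overline\lambda^2 v_{xx}^+-\underline\lambda^2 v_{xx}^-)=0$ on $[0,1)\times\mathbb R$. For $\lambda_0^{n-1}\in\mathfrak A^{n-1}$ put $t_j=s_j^2/s_n^2$ (with $t_0=0$), $X_j=\frac{1}{s_n}\sum_{k=0}^{j-1}\lambda_k\xi_{k+1}$, and $J_n=\mathsf E\sum_{j=0}^{n-1}\frac{\sigma_{j+1}^2}{s_n^2}\big(v_t(t_j,X_j)+\tfrac{\lambda_j^2}{2}v_{xx}(t_j,X_j)\big)$.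 Then $\lim_{n\to\infty}\sup_{\lambda_0^{n-1}\in\mathfrak A^{n-1}}J_n=0$. -/

import Mathlib

/-!
Write `G(A) = ½(λ̄² A⁺ - λ̲² A⁻)`, so that the equation says `v_t = -G(v_xx)`. If `|v_xx| ≤ C`,
then for every `λ ∈ [λ̲_j, λ̄_j]` the summand `v_t + λ² v_xx / 2 = λ² v_xx / 2 - G(v_xx)` is at most
`(C/2)(|λ̄_j² - λ̄²| + |λ̲_j² - λ̲²|)`, and the bang-bang choice `λ_j = λ̄_j` where `v_xx(t_j, X_j) ≥ 0`,
`λ_j = λ̲_j` elsewhere, makes it at least minus that quantity. This choice is a measurable function of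
`X_j`, hence adapted. Summing with the weights `σ_{j+1}²/s_n²`, the bound holds pathwise, so
`|sup J_n| ≤ (C/2) M_n → 0`.
-/

open MeasureTheory ProbabilityTheory Filter Finset

noncomputable def gHamiltonian (la lb A : ℝ) : ℝ := 1 / 2 * (lb ^ 2 * max A 0 - la ^ 2 * max (-A) 0)

section Hamiltonian

variable {la lb l0 l1 A C : ℝ}

lemma gHamiltonian_of_nonneg (hA : 0 ≤ A) : gHamiltonian la lb A = lb ^ 2 / 2 * A := by
  rw [gHamiltonian, max_eq_left hA, max_eq_right (neg_nonpos.mpr hA)]; ring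

lemma gHamiltonian_of_nonpos (hA : A ≤ 0) : gHamiltonian la lb A = la ^ 2 / 2 * A := by
  rw [gHamiltonian, max_eq_right hA, max_eq_left (neg_nonneg.mpr hA)]; ring

lemma mul_le_abs_mul_of_abs_le (d : ℝ) (hA : |A| ≤ C) : d * A ≤ |d| * C :=
  calc d * A ≤ |d| * |A| := (le_abs_self _).trans (abs_mul d A).le
    _ ≤ |d| * C := mul_le_mul_of_nonneg_left hA (abs_nonneg d)

lemma sq_div_two_mul_sub_gHamiltonian_le {lam : ℝ} (h0 : 0 ≤ l0) (hlam : lam ∈ Set.Icc l0 l1)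
    (hA : |A| ≤ C) :
    lam ^ 2 / 2 * A - gHamiltonian la lb A ≤ C / 2 * (|l1 ^ 2 - lb ^ 2| + |l0 ^ 2 - la ^ 2|) := by
  have hC : 0 ≤ C := (abs_nonneg A).trans hA
  rcases le_total 0 A with hA0 | hA0
  · have hlam_le : lam ^ 2 * A ≤ l1 ^ 2 * A :=
      mul_le_mul_of_nonneg_right (pow_le_pow_left₀ (h0.trans hlam.1) hlam.2 2) hA0
    have hd := mul_le_abs_mul_of_abs_le (l1 ^ 2 - lb ^ 2) hA
    have hlo := mul_nonneg (abs_nonneg (l0 ^ 2 - la ^ 2)) hC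
    rw [gHamiltonian_of_nonneg hA0]
    linarith
  · have hlam_le : lam ^ 2 * A ≤ l0 ^ 2 * A :=
      mul_le_mul_of_nonpos_right (pow_le_pow_left₀ h0 hlam.1 2) hA0
    have hd := mul_le_abs_mul_of_abs_le (l0 ^ 2 - la ^ 2) hA
    have hhi := mul_nonneg (abs_nonneg (l1 ^ 2 - lb ^ 2)) hC
    rw [gHamiltonian_of_nonpos hA0]
    linarith

lemma neg_le_sq_div_two_mul_sub_gHamiltonian (hA : |A| ≤ C) :
    -(C / 2 * (|l1 ^ 2 - lb ^ 2| + |l0 ^ 2 - la ^ 2|))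
      ≤ (if 0 ≤ A then l1 else l0) ^ 2 / 2 * A - gHamiltonian la lb A := by
  have hC : 0 ≤ C := (abs_nonneg A).trans hA
  split_ifs with hA0
  · have hd := mul_le_abs_mul_of_abs_le (lb ^ 2 - l1 ^ 2) hA
    have hlo := mul_nonneg (abs_nonneg (l0 ^ 2 - la ^ 2)) hC
    rw [abs_sub_comm] at hd
    rw [gHamiltonian_of_nonneg hA0]
    linarith
  · have hd := mul_le_abs_mul_of_abs_le (la ^ 2 - l0 ^ 2) hA
    have hhi := mul_nonneg (abs_nonneg (l1 ^ 2 - lb ^ 2)) hC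
    rw [abs_sub_comm] at hd
    rw [gHamiltonian_of_nonpos (not_le.mp hA0).le]
    linarith

end Hamiltonian

section WeightedSum

variable {ι : Type*} {S : Finset ι} {w f A lam llo lhi : ι → ℝ} {la lb C : ℝ}

lemma sum_mul_add_sq_div_two_mul_le (hw : ∀ i ∈ S, 0 ≤ w i)
    (hf : ∀ i ∈ S, f i + gHamiltonian la lb (A i) = 0) (hA : ∀ i ∈ S, |A i| ≤ C)
    (hllo : ∀ i ∈ S, 0 ≤ llo i) (hlam : ∀ i ∈ S, lam i ∈ Set.Icc (llo i) (lhi i)) :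
    ∑ i ∈ S, w i * (f i + lam i ^ 2 / 2 * A i)
      ≤ C / 2 * ∑ i ∈ S, w i * (|lhi i ^ 2 - lb ^ 2| + |llo i ^ 2 - la ^ 2|) := by
  rw [mul_sum]
  refine sum_le_sum fun i hi => ?_
  calc w i * (f i + lam i ^ 2 / 2 * A i)
      = w i * (lam i ^ 2 / 2 * A i - gHamiltonian la lb (A i)) := by
        rw [eq_neg_of_add_eq_zero_left (hf i hi)]; ring
    _ ≤ w i * (C / 2 * (|lhi i ^ 2 - lb ^ 2| + |llo i ^ 2 - la ^ 2|)) :=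
        mul_le_mul_of_nonneg_left
          (sq_div_two_mul_sub_gHamiltonian_le (hllo i hi) (hlam i hi) (hA i hi)) (hw i hi)
    _ = _ := by ring

lemma neg_le_sum_mul_add_sq_div_two_mul (hw : ∀ i ∈ S, 0 ≤ w i)
    (hf : ∀ i ∈ S, f i + gHamiltonian la lb (A i) = 0) (hA : ∀ i ∈ S, |A i| ≤ C)
    (hlam : ∀ i ∈ S, lam i = if 0 ≤ A i then lhi i else llo i) :
    -(C / 2 * ∑ i ∈ S, w i * (|lhi i ^ 2 - lb ^ 2| + |llo i ^ 2 - la ^ 2|))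
      ≤ ∑ i ∈ S, w i * (f i + lam i ^ 2 / 2 * A i) := by
  rw [mul_sum, ← sum_neg_distrib]
  refine sum_le_sum fun i hi => ?_
  calc -(C / 2 * (w i * (|lhi i ^ 2 - lb ^ 2| + |llo i ^ 2 - la ^ 2|)))
      = w i * -(C / 2 * (|lhi i ^ 2 - lb ^ 2| + |llo i ^ 2 - la ^ 2|)) := by ring
    _ ≤ w i * (lam i ^ 2 / 2 * A i - gHamiltonian la lb (A i)) :=
        mul_le_mul_of_nonneg_left
          (hlam i hi ▸ neg_le_sq_div_two_mul_sub_gHamiltonian (hA i hi)) (hw i hi)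
    _ = w i * (f i + lam i ^ 2 / 2 * A i) := by
        rw [eq_neg_of_add_eq_zero_left (hf i hi)]; ring

end WeightedSum

lemma integral_le_of_forall_le {α : Type*} {mα : MeasurableSpace α} {μ : Measure α}
    [IsProbabilityMeasure μ] {f : α → ℝ} {B : ℝ} (hB : 0 ≤ B) (hf : ∀ a, f a ≤ B) :
    ∫ a, f a ∂μ ≤ B := by
  by_cases hint : Integrable f μ
  · simpa using integral_mono hint (integrable_const B) hf
  · rw [integral_undef hint]; exact hB

lemma neg_le_integral_of_forall_neg_le {α : Type*} {mα : MeasurableSpace α} {μ : Measure α}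
    [IsProbabilityMeasure μ] {f : α → ℝ} {B : ℝ} (hB : 0 ≤ B) (hf : ∀ a, -B ≤ f a) :
    -B ≤ ∫ a, f a ∂μ := by
  have := integral_le_of_forall_le (μ := μ) hB fun a => neg_le.mp (hf a)
  rw [integral_neg] at this
  linarith

lemma abs_sSup_le_of_forall_le_of_exists_neg_le {S : Set ℝ} {B : ℝ} (hB : 0 ≤ B)
    (hle : ∀ r ∈ S, r ≤ B) (hge : ∃ r ∈ S, -B ≤ r) : |sSup S| ≤ B := by
  obtain ⟨r, hr, hBr⟩ := hge
  exact abs_le.mpr ⟨hBr.trans (le_csSup ⟨B, hle⟩ hr), Real.sSup_le hle hB⟩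

section Feedback

variable {Ω : Type*} {mΩ : MeasurableSpace Ω}

def feedbackSum (ξ : ℕ → Ω → ℝ) (c : ℝ) (pick : ℕ → ℝ → ℝ) : ℕ → Ω → ℝ
  | 0 => 0
  | j + 1 => fun ω =>
      feedbackSum ξ c pick j ω + pick j (c * feedbackSum ξ c pick j ω) * ξ (j + 1) ω

lemma exists_adapted_feedback (F : Filtration ℕ mΩ) {ξ : ℕ → Ω → ℝ}
    (hξ : ∀ j, Measurable[F (j + 1)] (ξ (j + 1))) (c : ℝ) {pick : ℕ → ℝ → ℝ}
    (hpick : ∀ j, Measurable (pick j)) :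
    ∃ lam : ℕ → Ω → ℝ, (∀ j, Measurable[F j] (lam j)) ∧
      ∀ j ω, lam j ω = pick j (c * ∑ k ∈ range j, lam k ω * ξ (k + 1) ω) := by
  set S := feedbackSum ξ c pick
  have hS : ∀ j ω, S j ω = ∑ k ∈ range j, pick k (c * S k ω) * ξ (k + 1) ω := by
    intro j ω
    induction j with
    | zero => rfl
    | succ j ih => rw [sum_range_succ, ← ih]; rfl
  have hSm : ∀ j, Measurable[F j] (S j) := by
    intro j
    induction j with
    | zero => exact measurable_const
    | succ j ih =>
      have ih' := ih.mono (F.mono j.le_succ) le_rfl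
      exact ih'.add (((hpick j).comp (ih'.const_mul c)).mul (hξ j))
  exact ⟨fun j ω => pick j (c * S j ω), fun j => (hpick j).comp ((hSm j).const_mul c),
    fun j ω => congrArg (fun x => pick j (c * x)) (hS j ω)⟩

end Feedback

section Model

variable {Ω : Type*} {mΩ : MeasurableSpace Ω}

noncomputable def normalizedTime (σ s : ℕ → ℝ) (n j : ℕ) : ℝ :=
  (∑ k ∈ range j, σ (k + 1) ^ 2) / s n ^ 2

noncomputable def scaledWalk (s : ℕ → ℝ) (ξ : ℕ → Ω → ℝ) (n : ℕ) (lam : ℕ → Ω → ℝ) (j : ℕ)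
    (ω : Ω) : ℝ :=
  1 / s n * ∑ k ∈ range j, lam k ω * ξ (k + 1) ω

noncomputable def generatorSum (σ s : ℕ → ℝ) (ξ : ℕ → Ω → ℝ) (vt vxx : ℝ × ℝ → ℝ) (n : ℕ)
    (lam : ℕ → Ω → ℝ) (ω : Ω) : ℝ :=
  ∑ j ∈ range n, σ (j + 1) ^ 2 / s n ^ 2 *
    (vt (normalizedTime σ s n j, scaledWalk s ξ n lam j ω)
      + lam j ω ^ 2 / 2 * vxx (normalizedTime σ s n j, scaledWalk s ξ n lam j ω))

noncomputable def stabilizationError (σ s llo lhi : ℕ → ℝ) (la lb : ℝ) (n : ℕ) : ℝ :=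
  ∑ j ∈ range n, σ (j + 1) ^ 2 / s n ^ 2 * (|lhi j ^ 2 - lb ^ 2| + |llo j ^ 2 - la ^ 2|)

variable {σ s llo lhi : ℕ → ℝ} {ξ : ℕ → Ω → ℝ} {vt vxx : ℝ × ℝ → ℝ} {la lb C : ℝ} {n : ℕ}

lemma normalizedTime_mem_Ico (hσ : ∀ j, 0 < σ j) (hs : s n ^ 2 = ∑ j ∈ range n, σ (j + 1) ^ 2)
    {j : ℕ} (hj : j < n) : normalizedTime σ s n j ∈ Set.Ico 0 1 := by
  have hpos : 0 < s n ^ 2 :=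
    hs ▸ sum_pos (fun k _ => pow_pos (hσ _) 2) ⟨0, mem_range.mpr (by omega)⟩
  refine ⟨div_nonneg (by positivity) hpos.le, (div_lt_one hpos).mpr ?_⟩
  rw [hs]
  exact sum_lt_sum_of_subset (range_subset_range.mpr hj.le) (mem_range.mpr hj)
    notMem_range_self (pow_pos (hσ _) 2) fun k _ _ => sq_nonneg _

lemma generatorSum_le
    (hPDE : ∀ t ∈ Set.Ico (0 : ℝ) 1, ∀ x, vt (t, x) + gHamiltonian la lb (vxx (t, x)) = 0)
    (hC : ∀ t ∈ Set.Ico (0 : ℝ) 1, ∀ x, |vxx (t, x)| ≤ C)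
    (ht : ∀ j < n, normalizedTime σ s n j ∈ Set.Ico 0 1)
    (hllo : ∀ j, 0 ≤ llo j) {lam : ℕ → Ω → ℝ}
    (hlam : ∀ j ω, lam j ω ∈ Set.Icc (llo j) (lhi j)) (ω : Ω) :
    generatorSum σ s ξ vt vxx n lam ω ≤ C / 2 * stabilizationError σ s llo lhi la lb n :=
  sum_mul_add_sq_div_two_mul_le (fun _ _ => by positivity)
    (fun j hj => hPDE _ (ht j (mem_range.mp hj)) _) (fun j hj => hC _ (ht j (mem_range.mp hj)) _)
    (fun j _ => hllo j) (fun j _ => hlam j ω)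

lemma neg_le_generatorSum
    (hPDE : ∀ t ∈ Set.Ico (0 : ℝ) 1, ∀ x, vt (t, x) + gHamiltonian la lb (vxx (t, x)) = 0)
    (hC : ∀ t ∈ Set.Ico (0 : ℝ) 1, ∀ x, |vxx (t, x)| ≤ C)
    (ht : ∀ j < n, normalizedTime σ s n j ∈ Set.Ico 0 1)
    {lam : ℕ → Ω → ℝ}
    (hlam : ∀ j < n, ∀ ω, lam j ω =
      if 0 ≤ vxx (normalizedTime σ s n j, scaledWalk s ξ n lam j ω) then lhi j else llo j)
    (ω : Ω) :
    -(C / 2 * stabilizationError σ s llo lhi la lb n) ≤ generatorSum σ s ξ vt vxx n lam ω :=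
  neg_le_sum_mul_add_sq_div_two_mul (fun _ _ => by positivity)
    (fun j hj => hPDE _ (ht j (mem_range.mp hj)) _) (fun j hj => hC _ (ht j (mem_range.mp hj)) _)
    (fun j hj => hlam j (mem_range.mp hj) ω)

lemma exists_adapted_bangBang (F : Filtration ℕ mΩ) (hξ : ∀ j, Measurable[F (j + 1)] (ξ (j + 1)))
    (hvxx : ContinuousOn vxx (Set.Icc (0 : ℝ) 1 ×ˢ Set.univ))
    (ht : ∀ j < n, normalizedTime σ s n j ∈ Set.Ico 0 1) (hlohi : ∀ j, llo j ≤ lhi j) :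
    ∃ lam : ℕ → Ω → ℝ, (∀ j, Measurable[F j] (lam j)) ∧
      (∀ j ω, lam j ω ∈ Set.Icc (llo j) (lhi j)) ∧
      ∀ j < n, ∀ ω, lam j ω =
        if 0 ≤ vxx (normalizedTime σ s n j, scaledWalk s ξ n lam j ω) then lhi j else llo j := by
  set pick : ℕ → ℝ → ℝ := fun j x =>
    if j < n ∧ 0 ≤ vxx (normalizedTime σ s n j, x) then lhi j else llo j
  have hpick : ∀ j, Measurable (pick j) := by
    intro j
    refine Measurable.ite ?_ measurable_const measurable_const
    by_cases hj : j < n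
    · have hcont : Continuous fun x => vxx (normalizedTime σ s n j, x) :=
        continuousOn_univ.mp (hvxx.comp (continuous_const.prodMk continuous_id).continuousOn
          fun _ _ => ⟨Set.Ico_subset_Icc_self (ht j hj), trivial⟩)
      simpa [hj] using measurableSet_le measurable_const hcont.measurable
    · simp [hj]
  obtain ⟨lam, hmeas, hlam⟩ := exists_adapted_feedback F hξ (1 / s n) hpick
  refine ⟨lam, hmeas, fun j ω => ?_, fun j hj ω => ?_⟩
  · rw [hlam]
    dsimp only [pick]
    split_ifs
    exacts [⟨hlohi j, le_rfl⟩, ⟨le_rfl, hlohi j⟩]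
  · exact (hlam j ω).trans (if_congr (and_iff_right hj) rfl rfl)

end Model

theorem stmt_8 {Ω : Type*} {mΩ : MeasurableSpace Ω} (P : Measure Ω) [IsProbabilityMeasure P]
    (F : Filtration ℕ mΩ) (ξ : ℕ → Ω → ℝ) (σ s : ℕ → ℝ)
    (hadapt : ∀ j, 1 ≤ j → Measurable[F j] (ξ j))
    (hσ : ∀ j, 0 < σ j)
    (hs : ∀ n, s n = Real.sqrt (∑ j ∈ Finset.range n, σ (j + 1) ^ 2))
    (llo lhi : ℕ → ℝ) (la lb : ℝ)
    (hllo : ∀ j, 0 ≤ llo j) (hlohi : ∀ j, llo j ≤ lhi j)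
    -- stabilization condition
    (hstab : Tendsto (fun n => ∑ j ∈ Finset.range n,
        σ (j + 1) ^ 2 / s n ^ 2 * (|lhi j ^ 2 - lb ^ 2| + |llo j ^ 2 - la ^ 2|))
      atTop (nhds 0))
    -- the function v and its partial derivatives
    (vt vxx : ℝ × ℝ → ℝ)
    (hvxx_cont : ContinuousOn vxx (Set.Icc (0:ℝ) 1 ×ˢ Set.univ))
    (hvxx_bd : ∃ C, ∀ z : ℝ × ℝ, z.1 ∈ Set.Icc (0:ℝ) 1 → |vxx z| ≤ C)
    -- the G-heat equation on [0,1) × ℝ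
    (hPDE : ∀ t ∈ Set.Ico (0:ℝ) 1, ∀ x : ℝ,
      vt (t, x) + (1 / 2) * (lb ^ 2 * max (vxx (t, x)) 0
        - la ^ 2 * max (-(vxx (t, x))) 0) = 0) :
    Tendsto (fun n => sSup {r : ℝ | ∃ lam : ℕ → Ω → ℝ,
        (∀ j, Measurable[F j] (lam j)) ∧
        (∀ j ω, lam j ω ∈ Set.Icc (llo j) (lhi j)) ∧
        r = ∫ ω, ∑ j ∈ Finset.range n, σ (j + 1) ^ 2 / s n ^ 2 *
          (vt ((∑ k ∈ Finset.range j, σ (k + 1) ^ 2) / s n ^ 2,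
              (1 / s n) * ∑ k ∈ Finset.range j, lam k ω * ξ (k + 1) ω)
            + lam j ω ^ 2 / 2 *
              vxx ((∑ k ∈ Finset.range j, σ (k + 1) ^ 2) / s n ^ 2,
                (1 / s n) * ∑ k ∈ Finset.range j, lam k ω * ξ (k + 1) ω)) ∂P})
      atTop (nhds 0) := by
  obtain ⟨C, hC⟩ := hvxx_bd
  have hs2 n : s n ^ 2 = ∑ j ∈ range n, σ (j + 1) ^ 2 := by
    rw [hs]; exact Real.sq_sqrt (by positivity)
  have ht n : ∀ j < n, normalizedTime σ s n j ∈ Set.Ico 0 1 :=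
    fun _ => normalizedTime_mem_Ico hσ (hs2 n)
  have hC' : ∀ t ∈ Set.Ico (0 : ℝ) 1, ∀ x, |vxx (t, x)| ≤ C :=
    fun t ht x => hC (t, x) (Set.Ico_subset_Icc_self ht)
  have hB n : 0 ≤ C / 2 * stabilizationError σ s llo lhi la lb n := by
    have hC0 : 0 ≤ C := (abs_nonneg _).trans (hC (0, 0) ⟨le_rfl, zero_le_one⟩)
    unfold stabilizationError; positivity
  refine squeeze_zero_norm (fun n => abs_sSup_le_of_forall_le_of_exists_neg_le (hB n) ?_ ?_)
    (by simpa [stabilizationError] using hstab.const_mul (C / 2))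
  · rintro _ ⟨lam, -, hlam, rfl⟩
    exact integral_le_of_forall_le (hB n) (generatorSum_le hPDE hC' (ht n) hllo hlam)
  · obtain ⟨lam, hmeas, hmem, hbang⟩ :=
      exists_adapted_bangBang F (fun j => hadapt (j + 1) (by omega)) hvxx_cont (ht n) hlohi
    exact ⟨_, ⟨lam, hmeas, hmem, rfl⟩,
      neg_le_integral_of_forall_neg_le (hB n) (neg_le_generatorSum hPDE hC' (ht n) hbang)⟩
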